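/- For any invertible n×n matrices A and B over a field F, rank(AB − BA) ≤ 2·min(rank(A − I), rank(B − I)). -/
import Mathlib

lemma matrix_rank_add_le {F : Type*} [Field F] {n : ℕ}
    (X Y : Matrix (Fin n) (Fin n) F) : (X + Y).rank ≤ X.rank + Y.rank := by
  simp only [Matrix.rank]
  calc Module.finrank F (LinearMap.range (X + Y).mulVecLin)
      ≤ Module.finrank F ↑(LinearMap.range X.mulVecLin ⊔ LinearMap.range Y.mulVecLin) := by
        apply Submodule.finrank_mono
        rw [Matrix.mulVecLin_add]
        intro v hv
        obtain ⟨u, rfl⟩ := hv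
        exact Submodule.add_mem_sup ⟨u, rfl⟩ ⟨u, rfl⟩
    _ ≤ _ := Submodule.finrank_add_le_finrank_add_finrank _ _

lemma matrix_rank_neg {F : Type*} [Field F] {n : ℕ}
    (X : Matrix (Fin n) (Fin n) F) : (-X).rank = X.rank := by
  have h : (-X).mulVecLin = -X.mulVecLin := by
    ext v i; simp [Matrix.mulVecLin]
  rw [Matrix.rank, Matrix.rank, h, LinearMap.range_neg]

lemma comm_rank_le {F : Type*} [Field F] {n : ℕ}
    (A B : Matrix (Fin n) (Fin n) F) : (A * B - B * A).rank ≤ 2 * (A - 1).rank := by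
  have h : A * B - B * A = (A - 1) * B + -(B * (A - 1)) := by noncomm_ring
  calc (A * B - B * A).rank
      ≤ ((A - 1) * B).rank + (-(B * (A - 1))).rank := by rw [h]; exact matrix_rank_add_le _ _
    _ ≤ (A - 1).rank + (A - 1).rank := by
        rw [matrix_rank_neg]
        exact add_le_add (Matrix.rank_mul_le_left _ _) (Matrix.rank_mul_le_right _ _)
    _ = 2 * (A - 1).rank := (two_mul _).symm

/-- For invertible n×n matrices A, B over a field F,
rank(AB − BA) ≤ 2·min(rank(A − I), rank(B − I)). -/
theorem stmt1 (F : Type*) [Field F] (n : ℕ)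
    (A B : Matrix.GeneralLinearGroup (Fin n) F) :
    ((A : Matrix (Fin n) (Fin n) F) * (B : Matrix (Fin n) (Fin n) F) -
      (B : Matrix (Fin n) (Fin n) F) * (A : Matrix (Fin n) (Fin n) F)).rank ≤
      2 * min (((A : Matrix (Fin n) (Fin n) F) - 1).rank)
        (((B : Matrix (Fin n) (Fin n) F) - 1).rank) := by
  have hmin : 2 * min ((A : Matrix (Fin n) (Fin n) F) - 1).rank
      ((B : Matrix (Fin n) (Fin n) F) - 1).rank =
      min (2 * ((A : Matrix (Fin n) (Fin n) F) - 1).rank)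
        (2 * ((B : Matrix (Fin n) (Fin n) F) - 1).rank) := (Nat.mul_min_mul_left ..).symm
  rw [hmin]
  refine le_min (comm_rank_le _ _) ?_
  have := comm_rank_le (B : Matrix (Fin n) (Fin n) F) (A : Matrix (Fin n) (Fin n) F)
  rwa [← matrix_rank_neg, neg_sub] at this
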